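/- Let E be an exact category. The Yoneda functor Y : E → Lex(E) is fully faithful and exact: it sends every conflation (f : A → B, g : B → C) of E to a short exact sequence 0 → Y(A) → Y(B) → Y(C) → 0 in the abelian category Lex(E) (i.e. Y(f) is a kernel of Y(g) and Y(g) is a cokernel of Y(f)). -/

import Mathlib

open CategoryTheory Limits Opposite

universe u

namespace Env

section Basics

variable {C : Type*} [Category C]

/-- `g` is a weak kernel of `f`. -/
def IsWeakKernel [Limits.HasZeroMorphisms C] {A B K : C} (f : B ⟶ A) (g : K ⟶ B) : Prop :=
  g ≫ f = 0 ∧ ∀ ⦃K' : C⦄ (g' : K' ⟶ B), g' ≫ f = 0 → ∃ t : K' ⟶ K, t ≫ g = g'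

/-- `h` is a weak cokernel of `f`. -/
def IsWeakCokernel [Limits.HasZeroMorphisms C] {A B Q : C} (f : A ⟶ B) (h : B ⟶ Q) : Prop :=
  f ≫ h = 0 ∧ ∀ ⦃Q' : C⦄ (h' : B ⟶ Q'), f ≫ h' = 0 → ∃ t : Q ⟶ Q', h ≫ t = h'

/-- A kernel–cokernel pair: `f ≫ g = 0`, `f` is a kernel of `g` and `g` is a cokernel of `f`. -/
structure IsKernelCokernelPair [Limits.HasZeroMorphisms C] {A B X : C}
    (f : A ⟶ B) (g : B ⟶ X) : Prop where
  zero : f ≫ g = 0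
  isKernel : Nonempty (IsLimit (KernelFork.ofι f zero))
  isCokernel : Nonempty (IsColimit (CokernelCofork.ofπ g zero))

end Basics

lemma map_comp_zero {C : Type*} [Category C] [Preadditive C]
    {D : Type*} [Category D] [Preadditive D]
    (F : C ⥤ D) (hF : F.Additive) {X Y Z : C} {f : X ⟶ Y} {g : Y ⟶ Z}
    (wzero : f ≫ g = 0) : F.map f ≫ F.map g = 0 := by
  haveI := hF
  rw [← F.map_comp, wzero, Functor.map_zero]

/-- A Quillen exact structure on an additive category: a distinguished class of conflations
(kernel–cokernel pairs) satisfying Quillen's axioms. -/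
structure ExactStructure (E : Type*) [Category E] [Preadditive E] where
  /-- `conf f g` means that `(f, g)` is a conflation. -/
  conf : ∀ ⦃A B C : E⦄, (A ⟶ B) → (B ⟶ C) → Prop
  conf_pair : ∀ ⦃A B C : E⦄ (f : A ⟶ B) (g : B ⟶ C), conf f g → IsKernelCokernelPair f g
  defl_id : ∀ X : E, ∃ (A : E) (f : A ⟶ X), conf f (𝟙 X)
  defl_comp : ∀ ⦃A B C : E⦄ (g : A ⟶ B) (g' : B ⟶ C),
    (∃ (K : E) (f : K ⟶ A), conf f g) → (∃ (K : E) (f : K ⟶ B), conf f g') →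
    ∃ (K : E) (f : K ⟶ A), conf f (g ≫ g')
  defl_pullback : ∀ ⦃B C C' : E⦄ (g : B ⟶ C) (h : C' ⟶ C),
    (∃ (K : E) (f : K ⟶ B), conf f g) →
    ∃ (B' : E) (p : B' ⟶ B) (q : B' ⟶ C') (w : p ≫ g = q ≫ h),
      (∃ (K : E) (f : K ⟶ B'), conf f q) ∧ Nonempty (IsLimit (PullbackCone.mk p q w))
  infl_pushout : ∀ ⦃A B A' : E⦄ (f : A ⟶ B) (h : A ⟶ A'),
    (∃ (C : E) (g : B ⟶ C), conf f g) →
    ∃ (B' : E) (p : B ⟶ B') (q : A' ⟶ B') (w : f ≫ p = h ≫ q),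
      (∃ (C : E) (g : B' ⟶ C), conf q g) ∧ Nonempty (IsColimit (PushoutCocone.mk p q w))

section Exact

variable {E : Type*} [Category E] [Preadditive E]

/-- `g` is a deflation for the exact structure `S`. -/
def ExactStructure.IsDeflation (S : ExactStructure E) {B C : E} (g : B ⟶ C) : Prop :=
  ∃ (K : E) (f : K ⟶ B), S.conf f g

/-- `f` is an inflation for the exact structure `S`. -/
def ExactStructure.IsInflation (S : ExactStructure E) {A B : E} (f : A ⟶ B) : Prop :=
  ∃ (C : E) (g : B ⟶ C), S.conf f g

/-- A functor from an exact category to an additive category is right exact if it is additive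
and for every conflation `(f, g)`, `F g` is a cokernel of `F f`. -/
structure IsRightExact (S : ExactStructure E) {B : Type*} [Category B] [Preadditive B]
    (F : E ⥤ B) : Prop where
  additive : F.Additive
  preserves : ∀ ⦃A X C : E⦄ (f : A ⟶ X) (g : X ⟶ C) (h : S.conf f g),
    Nonempty (IsColimit (CokernelCofork.ofπ (F.map g)
      (map_comp_zero F additive (S.conf_pair f g h).zero)))

/-- A functor from an exact category to an additive category is left exact if it is additive
and for every conflation `(f, g)`, `F f` is a kernel of `F g`. -/
structure IsLeftExact (S : ExactStructure E) {B : Type*} [Category B] [Preadditive B]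
    (F : E ⥤ B) : Prop where
  additive : F.Additive
  preserves : ∀ ⦃A X C : E⦄ (f : A ⟶ X) (g : X ⟶ C) (h : S.conf f g),
    Nonempty (IsLimit (KernelFork.ofι (F.map f)
      (map_comp_zero F additive (S.conf_pair f g h).zero)))

/-- `g : C ⟶ B` is an Ext-kernel of `f : B ⟶ A` (w.r.t. the exact structure `S`):
`g ≫ f = 0` and for every `g' : C' ⟶ B` with `g' ≫ f = 0` there is a deflation
`d : D ⟶ C'` such that `d ≫ g'` factors through `g`. -/
def IsExtKernel (S : ExactStructure E) {A B C : E} (f : B ⟶ A) (g : C ⟶ B) : Prop :=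
  g ≫ f = 0 ∧ ∀ ⦃C' : E⦄ (g' : C' ⟶ B), g' ≫ f = 0 →
    ∃ (D : E) (d : D ⟶ C'), S.IsDeflation d ∧ ∃ t : D ⟶ C, t ≫ g = d ≫ g'

/-- An exact category is left Ext-coherent if every morphism admits an Ext-kernel. -/
def LeftExtCoherent (S : ExactStructure E) : Prop :=
  ∀ ⦃B A : E⦄ (f : B ⟶ A), ∃ (C : E) (g : C ⟶ B), IsExtKernel S f g

end Exact

/-- An additive category is left coherent if every morphism admits a weak kernel. -/
def LeftCoherent (E : Type*) [Category E] [Preadditive E] : Prop :=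
  ∀ ⦃B A : E⦄ (f : B ⟶ A), ∃ (K : E) (g : K ⟶ B), IsWeakKernel f g

section MoreDefs

variable (C : Type*) [Category C] [Preadditive C]

/-- An additive functor between additive categories preserving cokernels: every morphism
which is a cokernel (of some morphism) is sent to a cokernel of its image. -/
structure PreservesCokernelsP {C : Type*} [Category C] [Preadditive C]
    {D : Type*} [Category D] [Preadditive D] (F : C ⥤ D) : Prop where
  additive : F.Additive
  preserves : ∀ ⦃X Y Z : C⦄ (f : X ⟶ Y) (c : Y ⟶ Z) (w : f ≫ c = 0),
    Nonempty (IsColimit (CokernelCofork.ofπ c w)) →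
    Nonempty (IsColimit (CokernelCofork.ofπ (F.map c) (map_comp_zero F additive w)))

/-- An additive category is left abelian if it has cokernels and for every morphism
`f : A ⟶ B` with cokernel `c : B ⟶ X` and every `g : D ⟶ B` with `g ≫ c = 0` there is
a morphism `d : E ⟶ D` which is a cokernel (of some morphism), such that `d ≫ g` factors
through `f`. -/
structure IsLeftAbelian : Prop where
  hasCokernels : HasCokernels C
  factor : ∀ ⦃A B X : C⦄ (f : A ⟶ B) (c : B ⟶ X) (w : f ≫ c = 0),
    Nonempty (IsColimit (CokernelCofork.ofπ c w)) →
    ∀ ⦃D : C⦄ (g : D ⟶ B), g ≫ c = 0 →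
      ∃ (W E : C) (u : W ⟶ E) (d : E ⟶ D) (w' : u ≫ d = 0),
        Nonempty (IsColimit (CokernelCofork.ofπ d w')) ∧ ∃ t : E ⟶ A, t ≫ f = d ≫ g

/-- A preadditive category (with its given preadditive structure) is abelian:
it has finite biproducts, kernels and cokernels, and every monomorphism and every
epimorphism is normal. -/
def IsAbelianP : Prop :=
  HasFiniteBiproducts C ∧ HasKernels C ∧ HasCokernels C ∧
    (∀ ⦃X Y : C⦄ (f : X ⟶ Y), Mono f → Nonempty (NormalMono f)) ∧
    (∀ ⦃X Y : C⦄ (f : X ⟶ Y), Epi f → Nonempty (NormalEpi f))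

end MoreDefs

/-- An object `X` is compact (finitely presented) if `Hom(X, -)` preserves filtered colimits
(indexed by small filtered categories in `Type u`). -/
def IsCompact {C : Type*} [Category C] (X : C) : Prop :=
  ∀ (J : Type u) (_ : SmallCategory J), IsFiltered J →
    Nonempty (PreservesColimitsOfShape J (coyoneda.obj (op X)))

section RexAbelian

variable {A : Type*} [Category A] [Abelian A] {B : Type*} [Category B] [Preadditive B]

/-- A functor from an abelian category (whose conflations are all kernel–cokernel pairs,
i.e. all short exact sequences) is right exact if it is additive and sends every short exact
sequence `(f, g)` to a diagram where `F g` is a cokernel of `F f`. -/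
structure IsRightExactAb (F : A ⥤ B) : Prop where
  additive : F.Additive
  preserves : ∀ ⦃X Y Z : A⦄ (f : X ⟶ Y) (g : Y ⟶ Z) (h : IsKernelCokernelPair f g),
    Nonempty (IsColimit (CokernelCofork.ofπ (F.map g) (map_comp_zero F additive h.zero)))

/-- A functor from an abelian category (whose conflations are all kernel–cokernel pairs,
i.e. all short exact sequences) is left exact if it is additive and sends every short exact
sequence `(f, g)` to a diagram where `F f` is a kernel of `F g`. -/
structure IsLeftExactAb (F : A ⥤ B) : Prop where
  additive : F.Additive
  preserves : ∀ ⦃X Y Z : A⦄ (f : X ⟶ Y) (g : Y ⟶ Z) (h : IsKernelCokernelPair f g),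
    Nonempty (IsLimit (KernelFork.ofι (F.map f) (map_comp_zero F additive h.zero)))

end RexAbelian

section Envelope

/-- `(A, i)` is a right abelian envelope of the exact category `(E, S)`: `i` is right exact
and for every abelian category `B`, precomposition with `i` induces an equivalence from the
category of right exact functors `A ⥤ B` to the category of right exact functors `E ⥤ B`.

The equivalence given by precomposition is expressed by: precomposition with `i` sends right
exact functors to right exact functors, it is fully faithful (whiskering is a bijection on
natural transformations) and essentially surjective (every right exact `E ⥤ B` is isomorphic
to some `i ⋙ G` with `G` right exact). -/
structure IsRightAbelianEnvelope.{u₀, w₀, v₁, w₁, v₂, w₂} {E : Type u₀} [Category.{w₀} E]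
    [Preadditive E] (S : ExactStructure E)
    {A : Type v₁} [Category.{w₁} A] [Abelian A] (i : E ⥤ A) : Prop where
  rightExact : IsRightExact S i
  comp_rightExact : ∀ (B : Type v₂) [Category.{w₂} B] [Abelian B] (G : A ⥤ B),
    IsRightExactAb G → IsRightExact S (i ⋙ G)
  whisker_bijective : ∀ (B : Type v₂) [Category.{w₂} B] [Abelian B] (G G' : A ⥤ B),
    IsRightExactAb G → IsRightExactAb G' →
      Function.Bijective (fun σ : G ⟶ G' => Functor.whiskerLeft i σ)
  essSurj : ∀ (B : Type v₂) [Category.{w₂} B] [Abelian B] (F : E ⥤ B),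
    IsRightExact S F → ∃ G : A ⥤ B, IsRightExactAb G ∧ Nonempty (i ⋙ G ≅ F)

/-- `(A, i)` is a left abelian envelope of the exact category `(E, S)`: the dual notion of
`IsRightAbelianEnvelope`, with left exact functors in place of right exact ones. -/
structure IsLeftAbelianEnvelope.{u₀, w₀, v₁, w₁, v₂, w₂} {E : Type u₀} [Category.{w₀} E]
    [Preadditive E] (S : ExactStructure E)
    {A : Type v₁} [Category.{w₁} A] [Abelian A] (i : E ⥤ A) : Prop where
  leftExact : IsLeftExact S i
  comp_leftExact : ∀ (B : Type v₂) [Category.{w₂} B] [Abelian B] (G : A ⥤ B),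
    IsLeftExactAb G → IsLeftExact S (i ⋙ G)
  whisker_bijective : ∀ (B : Type v₂) [Category.{w₂} B] [Abelian B] (G G' : A ⥤ B),
    IsLeftExactAb G → IsLeftExactAb G' →
      Function.Bijective (fun σ : G ⟶ G' => Functor.whiskerLeft i σ)
  essSurj : ∀ (B : Type v₂) [Category.{w₂} B] [Abelian B] (F : E ⥤ B),
    IsLeftExact S F → ∃ G : A ⥤ B, IsLeftExactAb G ∧ Nonempty (i ⋙ G ≅ F)

/-- A witness for the existence of a right abelian envelope of `(E, S)`: an abelian
category (with object type in `Type (u + 1)` and hom types in `Type u`) together with a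
right exact functor from `E` satisfying the universal property of the right abelian
envelope (where the test abelian categories are taken of the same size). -/
structure RightAbelianEnvelopeWitness {E : Type u} [SmallCategory E] [Preadditive E]
    (S : ExactStructure E) where
  A : Type (u + 1)
  [cat : Category.{u} A]
  [ab : Abelian A]
  i : E ⥤ A
  env : IsRightAbelianEnvelope.{u, u, u + 1, u, u + 1, u} S i

/-- Existence of a right abelian envelope of `(E, S)`. -/
def HasRightAbelianEnvelope {E : Type u} [SmallCategory E] [Preadditive E]
    (S : ExactStructure E) : Prop :=
  Nonempty (RightAbelianEnvelopeWitness S)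

end Envelope

section Lex

variable {E : Type u} [SmallCategory E] [Preadditive E]

/-- A functor `Eᵒᵖ ⥤ Ab` is left exact w.r.t. the exact structure `S` if it is additive and
sends every conflation `(f : A ⟶ B, g : B ⟶ C)` to an exact sequence
`0 ⟶ F C ⟶ F B ⟶ F A`: `F g.op` is injective and its image is the kernel of `F f.op`. -/
structure IsLexFunctor (S : ExactStructure E) (F : Eᵒᵖ ⥤ AddCommGrpCat.{u}) : Prop where
  additive : F.Additive
  inj : ∀ ⦃A B C : E⦄ (f : A ⟶ B) (g : B ⟶ C), S.conf f g →
    Function.Injective (F.map g.op)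
  ex : ∀ ⦃A B C : E⦄ (f : A ⟶ B) (g : B ⟶ C), S.conf f g →
    ∀ x : F.obj (op B), F.map f.op x = 0 ↔ ∃ y : F.obj (op C), F.map g.op y = x

/-- The category `Lex(E)` of left exact functors `Eᵒᵖ ⥤ Ab`. -/
abbrev LexCat (S : ExactStructure E) := ObjectProperty.FullSubcategory (IsLexFunctor S)

/-- The full subcategory of compact objects of `Lex(E)`. -/
abbrev LexCompact (S : ExactStructure E) :=
  ObjectProperty.FullSubcategory (fun F : LexCat S => IsCompact.{u} F)

lemma yoneda_isLex (S : ExactStructure E) (X : E) :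
    IsLexFunctor S (preadditiveYoneda.obj X) where
  additive := inferInstance
  inj := by
    intro A B C f g hc
    obtain ⟨w, hker, hcoker⟩ := S.conf_pair f g hc
    intro x y hxy
    exact Cofork.IsColimit.hom_ext hcoker.some hxy
  ex := by
    intro A B C f g hc
    obtain ⟨w, hker, hcoker⟩ := S.conf_pair f g hc
    intro x
    constructor
    · intro hx
      obtain ⟨y, hy⟩ := CokernelCofork.IsColimit.desc' hcoker.some x hx
      exact ⟨y, hy⟩
    · rintro ⟨y, rfl⟩
      have h : ∀ z : C ⟶ X, f ≫ g ≫ z = 0 := fun z => by rw [← Category.assoc, w, zero_comp]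
      exact h y

/-- The Yoneda embedding of `E` into `Lex(E)`, sending `X` to `Hom_E(-, X)`. -/
def yonedaLex (S : ExactStructure E) : E ⥤ LexCat S :=
  ObjectProperty.lift _ preadditiveYoneda (yoneda_isLex S)

/-- The Yoneda embedding of `E` into the subcategory of compact objects of `Lex(E)`, given
a proof that all representable functors are compact. -/
def yonedaLexC (S : ExactStructure E) (hc : ∀ X : E, IsCompact.{u} ((yonedaLex S).obj X)) :
    E ⥤ LexCompact S :=
  ObjectProperty.lift _ (yonedaLex S) hc

end Lex

section LFP

variable {C : Type*} [Category C]

/-- `X` is a filtered colimit of compact objects. -/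
def IsFilteredColimitOfCompacts (X : C) : Prop :=
  ∃ (J : Type u) (_ : SmallCategory J) (_ : IsFiltered J) (F : J ⥤ C)
    (_ : ∀ j : J, IsCompact.{u} (F.obj j)),
    Nonempty ((t : Cocone F) ×' (IsColimit t) ×' (t.pt ≅ X))

/-- A category is locally finitely presented if it has (small) filtered colimits, its
compact objects form a skeletally small full subcategory, and every object is a filtered
colimit of compact objects. -/
def IsLocallyFinitelyPresented (C : Type*) [Category C] : Prop :=
  HasFilteredColimitsOfSize.{u, u} C ∧
    EssentiallySmall.{u} (ObjectProperty.FullSubcategory (fun X : C => IsCompact.{u} X)) ∧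
    ∀ X : C, IsFilteredColimitOfCompacts.{u} X

/-- AB5: small filtered colimits are exact, i.e. for every small filtered category `J`
(such that `C` has colimits of shape `J`), the colimit functor `(J ⥤ C) ⥤ C` preserves
finite limits. -/
def AB5P (C : Type*) [Category C] : Prop :=
  ∀ (J : Type u) (_ : SmallCategory J), IsFiltered J →
    ∀ (h : HasColimitsOfShape J C),
      Nonempty (PreservesFiniteLimits (@colim J _ C _ h))

/-- A Grothendieck category: an abelian category (`IsAbelianP` w.r.t. the given preadditive
structure) with a generator and small colimits, in which small filtered colimits are
exact (AB5). -/
def IsGrothendieckP (C : Type*) [Category C] [Preadditive C] : Prop :=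
  IsAbelianP C ∧ HasColimitsOfSize.{u, u} C ∧ (∃ G : C, IsSeparator G) ∧ AB5P.{u} C

end LFP

/-!
`Y f` is a kernel of `Y g` because the preadditive Yoneda embedding preserves limits (composed
with the forgetful functor it is the ordinary Yoneda embedding, and forgetting reflects limits)
and the inclusion of `Lex(E)` into all presheaves of abelian groups is fully faithful, hence
reflects them. For the cokernel, the Yoneda lemma identifies morphisms `Y Z ⟶ T` with elements
of `T(Z)`, and under this identification the universal property of `Y g` as a cokernel of `Y f`
tested against `T` is exactly the exactness of `0 ⟶ T(Z) ⟶ T(Y) ⟶ T(X)`, i.e. the left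
exactness of `T`.
-/

universe v w

section PreadditiveYoneda

variable {C : Type w} [Category.{v} C] [Preadditive C]

instance : (preadditiveYoneda : C ⥤ Cᵒᵖ ⥤ AddCommGrpCat.{v}).Additive where
  map_add {_ _ _ _} := by
    ext
    exact Preadditive.comp_add _ _ _ _ _ _

instance : PreservesLimitsOfSize.{v, v} (preadditiveYoneda : C ⥤ Cᵒᵖ ⥤ AddCommGrpCat.{v}) where
  preservesLimitsOfShape {J} _ :=
    have : PreservesLimitsOfShape J (preadditiveYoneda ⋙
        (Functor.whiskeringRight Cᵒᵖ AddCommGrpCat.{v} (Type v)).obj (forget AddCommGrpCat)) :=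
      inferInstanceAs (PreservesLimitsOfShape J yoneda)
    preservesLimitsOfShape_of_reflects_of_preserves _
      ((Functor.whiskeringRight Cᵒᵖ AddCommGrpCat.{v} (Type v)).obj (forget AddCommGrpCat))

def preadditiveYonedaEquiv (Z : C) (T : Cᵒᵖ ⥤ AddCommGrpCat.{v}) [T.Additive] :
    (preadditiveYoneda.obj Z ⟶ T) ≃ T.obj (op Z) where
  toFun τ := τ.app (op Z) (𝟙 Z)
  invFun γ :=
    { app X := AddCommGrpCat.ofHom
        { toFun (ψ : X.unop ⟶ Z) := T.map ψ.op γ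
          map_zero' := by
            change T.map (0 : X.unop ⟶ Z).op γ = 0
            rw [op_zero, T.map_zero, AddCommGrpCat.zero_apply]
          map_add' (ψ₁ ψ₂ : X.unop ⟶ Z) := by
            change T.map (ψ₁ + ψ₂).op γ = T.map ψ₁.op γ + T.map ψ₂.op γ
            rw [op_add, T.map_add, AddCommGrpCat.hom_add_apply] }
      naturality X X' u := by
        ext (ψ : X.unop ⟶ Z)
        change T.map (u.unop ≫ ψ).op γ = T.map u (T.map ψ.op γ)
        rw [op_comp, T.map_comp, Quiver.Hom.op_unop, ConcreteCategory.comp_apply] }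
  left_inv τ := by
    ext X (ψ : X.unop ⟶ Z)
    have h := ConcreteCategory.congr_hom (τ.naturality ψ.op) (𝟙 Z)
    change τ.app X (ψ ≫ 𝟙 Z) = T.map ψ.op (τ.app (op Z) (𝟙 Z)) at h
    rw [Category.comp_id] at h
    exact h.symm
  right_inv γ := by
    change T.map (𝟙 Z).op γ = γ
    rw [op_id, T.map_id, ConcreteCategory.id_apply]

lemma preadditiveYonedaEquiv_map_comp {Y Z : C} (g : Y ⟶ Z) (T : Cᵒᵖ ⥤ AddCommGrpCat.{v})
    [T.Additive] (τ : preadditiveYoneda.obj Z ⟶ T) :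
    preadditiveYonedaEquiv Y T (preadditiveYoneda.map g ≫ τ) =
      T.map g.op (preadditiveYonedaEquiv Z T τ) := by
  have h := ConcreteCategory.congr_hom (τ.naturality g.op) (𝟙 Z)
  change τ.app (op Y) (g ≫ 𝟙 Z) = T.map g.op (τ.app (op Z) (𝟙 Z)) at h
  change τ.app (op Y) (𝟙 Y ≫ g) = _
  rw [Category.id_comp]
  rwa [Category.comp_id] at h

end PreadditiveYoneda

section Lex

variable {E : Type u} [SmallCategory E] [Preadditive E] {S : ExactStructure E}

instance : (yonedaLex S).Full := by unfold yonedaLex; infer_instance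

instance : (yonedaLex S).Faithful := by unfold yonedaLex; infer_instance

instance : (yonedaLex S).Additive := by unfold yonedaLex; infer_instance

instance : PreservesLimits (yonedaLex S) :=
  have : PreservesLimits (yonedaLex S ⋙ ObjectProperty.ι _) :=
    inferInstanceAs (PreservesLimits preadditiveYoneda)
  preservesLimits_of_reflects_of_preserves _ (ObjectProperty.ι _)

def yonedaLexHomEquiv (Z : E) (T : LexCat S) : ((yonedaLex S).obj Z ⟶ T) ≃ T.obj.obj (op Z) :=
  have := T.property.additive
  (ObjectProperty.fullyFaithfulι _).homEquiv.trans (preadditiveYonedaEquiv Z T.obj)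

lemma yonedaLexHomEquiv_map_comp {Y Z : E} (g : Y ⟶ Z) {T : LexCat S}
    (τ : (yonedaLex S).obj Z ⟶ T) :
    yonedaLexHomEquiv Y T ((yonedaLex S).map g ≫ τ) = T.obj.map g.op (yonedaLexHomEquiv Z T τ) :=
  have := T.property.additive
  preadditiveYonedaEquiv_map_comp g T.obj τ.hom

lemma yonedaLexHomEquiv_zero (Z : E) (T : LexCat S) : yonedaLexHomEquiv Z T 0 = 0 := rfl

noncomputable def yonedaLexMapIsCokernel {X Y Z : E} {f : X ⟶ Y} {g : Y ⟶ Z} (hfg : S.conf f g) :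
    IsColimit (CokernelCofork.ofπ ((yonedaLex S).map g)
      (map_comp_zero _ inferInstance (S.conf_pair f g hfg).zero)) :=
  Cofork.IsColimit.ofExistsUnique fun s => by
    let e := yonedaLexHomEquiv Y s.pt
    have hs : s.pt.obj.map f.op (e s.π) = 0 := by
      rw [← yonedaLexHomEquiv_map_comp, CokernelCofork.condition, yonedaLexHomEquiv_zero]
    obtain ⟨γ, hγ⟩ := (s.pt.property.ex f g hfg (e s.π)).mp hs
    have hγ_unique : ∃! γ, s.pt.obj.map g.op γ = e s.π :=
      ⟨γ, hγ, fun γ' hγ' => s.pt.property.inj f g hfg (hγ'.trans hγ.symm)⟩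
    refine ((yonedaLexHomEquiv Z s.pt).existsUnique_congr fun d => ?_).mpr hγ_unique
    rw [Cofork.π_ofπ, ← e.apply_eq_iff_eq, yonedaLexHomEquiv_map_comp]

lemma yonedaLex_map_isKernelCokernelPair {X Y Z : E} {f : X ⟶ Y} {g : Y ⟶ Z}
    (hfg : S.conf f g) : IsKernelCokernelPair ((yonedaLex S).map f) ((yonedaLex S).map g) :=
  ⟨_, (S.conf_pair f g hfg).isKernel.map (isLimitForkMapOfIsLimit' _ _),
    ⟨yonedaLexMapIsCokernel hfg⟩⟩

end Lex

theorem statement_13_general {E : Type u} [SmallCategory E] [Preadditive E]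
    (S : ExactStructure E) :
    (yonedaLex S).Full ∧ (yonedaLex S).Faithful ∧
    ∀ ⦃X Y Z : E⦄ (f : X ⟶ Y) (g : Y ⟶ Z), S.conf f g →
      IsKernelCokernelPair ((yonedaLex S).map f) ((yonedaLex S).map g) :=
  ⟨inferInstance, inferInstance, fun _ _ _ _ _ => yonedaLex_map_isKernelCokernelPair⟩

/-- The Yoneda functor `E ⥤ Lex(E)` is fully faithful and exact: it sends every conflation
`(f, g)` of `E` to a short exact sequence (`Y f` is a kernel of `Y g` and `Y g` is a
cokernel of `Y f`). -/
theorem statement_13 {E : Type u} [SmallCategory E] [Preadditive E] [HasFiniteBiproducts E]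
    (S : ExactStructure E) :
    (yonedaLex S).Full ∧ (yonedaLex S).Faithful ∧
    ∀ ⦃X Y Z : E⦄ (f : X ⟶ Y) (g : Y ⟶ Z), S.conf f g →
      IsKernelCokernelPair ((yonedaLex S).map f) ((yonedaLex S).map g) :=
  statement_13_general S

end Env
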